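/- arXiv:1505.00414 — 3 statements merged into one kernel-verified Lean document; each statement's English description precedes it below -/
import Mathlib

section
/- Let H be a Hilbert space, p, q ∈ H with p ≠ 0, q ≠ 0, and let γ(x) = ⟨x, p⟩/‖p‖² and γ_h(x) = ⟨x, q⟩/‖q‖² be the coefficients of the orthogonal projections of x onto Span{p} and Span{q}. Then for all x ∈ H, ‖γ(x) p − γ_h(x) q‖ ≤ (3/‖p‖) ‖x‖ ‖p − q‖ · max(1, ‖p‖/‖q‖)², and in particular if ‖p − q‖ ≤ ‖p‖/2 then ‖γ(x)p − γ_h(x)q‖ ≤ C ‖x‖ ‖p − q‖ with C depending only on ‖p‖. -/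
/-!
Normalising `p` and `q` to unit vectors `u`, `v` turns both sides into rank-one projections.
Cauchy–Schwarz, applied to the components of `x` and `v` orthogonal to `u`, gives
`‖⟪x, u⟫ u - ⟪x, v⟫ v‖² ≤ ‖x‖² (1 - ⟪u, v⟫²) ≤ ‖x‖² ‖u - v‖²`, and `‖u - v‖ ≤ 2 ‖p - q‖ / ‖p‖`.
So the bound holds with the constant `2 / ‖p‖`, which is below the claimed one.
-/

open RealInnerProductSpace

section Normed

variable {E : Type*} [NormedAddCommGroup E] [NormedSpace ℝ E]

theorem norm_inv_norm_smul_sub_inv_norm_smul_le {p : E} (hp : p ≠ 0) (q : E) :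
    ‖‖p‖⁻¹ • p - ‖q‖⁻¹ • q‖ ≤ 2 * ‖p - q‖ / ‖p‖ := by
  have hp' : 0 < ‖p‖ := norm_pos_iff.mpr hp
  have hscale : ‖(‖p‖⁻¹ - ‖q‖⁻¹) • q‖ ≤ ‖p - q‖ / ‖p‖ := by
    rcases eq_or_ne q 0 with rfl | hq
    · simp only [norm_zero, smul_zero]; positivity
    have hq' : 0 < ‖q‖ := norm_pos_iff.mpr hq
    calc ‖(‖p‖⁻¹ - ‖q‖⁻¹) • q‖ = |(‖p‖⁻¹ - ‖q‖⁻¹) * ‖q‖| := by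
          rw [norm_smul, Real.norm_eq_abs, abs_mul, abs_norm]
      _ = |(‖q‖ - ‖p‖) / ‖p‖| := by
          congr 1
          field_simp
      _ = |‖q‖ - ‖p‖| / ‖p‖ := by rw [abs_div, abs_norm]
      _ ≤ ‖p - q‖ / ‖p‖ := by
          gcongr
          rw [norm_sub_rev]
          exact abs_norm_sub_norm_le q p
  calc ‖‖p‖⁻¹ • p - ‖q‖⁻¹ • q‖ = ‖‖p‖⁻¹ • (p - q) + (‖p‖⁻¹ - ‖q‖⁻¹) • q‖ := by
        rw [smul_sub, sub_smul, sub_add_sub_cancel]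
    _ ≤ ‖‖p‖⁻¹ • (p - q)‖ + ‖(‖p‖⁻¹ - ‖q‖⁻¹) • q‖ := norm_add_le _ _
    _ ≤ ‖p - q‖ / ‖p‖ + ‖p - q‖ / ‖p‖ := by
        rw [norm_smul, norm_inv, norm_norm, inv_mul_eq_div]
        gcongr
    _ = 2 * ‖p - q‖ / ‖p‖ := by ring

end Normed

section InnerProduct

variable {F : Type*} [NormedAddCommGroup F] [InnerProductSpace ℝ F]

theorem norm_inner_smul_sub_inner_smul_sq_le {u v : F} (hu : ‖u‖ = 1) (hv : ‖v‖ = 1) (x : F) :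
    ‖⟪x, u⟫ • u - ⟪x, v⟫ • v‖ ^ 2 ≤ ‖x‖ ^ 2 * (1 - ⟪u, v⟫ ^ 2) := by
  have hCS := real_inner_mul_inner_self_le (x - ⟪x, u⟫ • u) (v - ⟪u, v⟫ • u)
  rw [← real_inner_self_eq_norm_sq]
  simp only [inner_sub_left, inner_sub_right, real_inner_smul_left, real_inner_smul_right,
    real_inner_self_eq_norm_sq, norm_smul, mul_pow, Real.norm_eq_abs, sq_abs, hu, hv,
    real_inner_comm u v, real_inner_comm x u] at hCS ⊢
  linear_combination hCS

theorem norm_inner_smul_sub_inner_smul_le {u v : F} (hu : ‖u‖ = 1) (hv : ‖v‖ = 1) (x : F) :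
    ‖⟪x, u⟫ • u - ⟪x, v⟫ • v‖ ≤ ‖x‖ * ‖u - v‖ := by
  have hcos : ⟪u, v⟫ ≤ 1 := by simpa [hu, hv] using real_inner_le_norm u v
  have hsin : 1 - ⟪u, v⟫ ^ 2 ≤ ‖u - v‖ ^ 2 := by
    rw [norm_sub_sq_real, hu, hv]
    nlinarith [abs_real_inner_le_norm u v]
  refine le_of_sq_le_sq ?_ (by positivity)
  calc ‖⟪x, u⟫ • u - ⟪x, v⟫ • v‖ ^ 2 ≤ ‖x‖ ^ 2 * (1 - ⟪u, v⟫ ^ 2) :=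
        norm_inner_smul_sub_inner_smul_sq_le hu hv x
    _ ≤ (‖x‖ * ‖u - v‖) ^ 2 := by rw [mul_pow]; gcongr

theorem inner_div_norm_sq_smul_eq (x p : F) :
    (⟪x, p⟫ / ‖p‖ ^ 2) • p = ⟪x, ‖p‖⁻¹ • p⟫ • ‖p‖⁻¹ • p := by
  rw [real_inner_smul_right, smul_smul]
  ring_nf

theorem norm_inner_div_norm_sq_smul_sub_le {p q : F} (hp : p ≠ 0) (hq : q ≠ 0) (x : F) :
    ‖(⟪x, p⟫ / ‖p‖ ^ 2) • p - (⟪x, q⟫ / ‖q‖ ^ 2) • q‖ ≤ 2 / ‖p‖ * ‖x‖ * ‖p - q‖ := by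
  rw [inner_div_norm_sq_smul_eq x p, inner_div_norm_sq_smul_eq x q]
  calc _ ≤ ‖x‖ * ‖‖p‖⁻¹ • p - ‖q‖⁻¹ • q‖ :=
        norm_inner_smul_sub_inner_smul_le (norm_smul_inv_norm hp) (norm_smul_inv_norm hq) x
    _ ≤ ‖x‖ * (2 * ‖p - q‖ / ‖p‖) := by
        gcongr
        exact norm_inv_norm_smul_sub_inv_norm_smul_le hp q
    _ = 2 / ‖p‖ * ‖x‖ * ‖p - q‖ := by ring

end InnerProduct

theorem projection_perturbation_general
    (H : Type*) [NormedAddCommGroup H] [InnerProductSpace ℝ H]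
    (p q : H) (hp : p ≠ 0) (hq : q ≠ 0) :
    (∀ x : H,
      ‖(⟪x, p⟫ / ‖p‖ ^ 2) • p - (⟪x, q⟫ / ‖q‖ ^ 2) • q‖ ≤
        (3 / ‖p‖) * ‖x‖ * ‖p - q‖ * (max 1 (‖p‖ / ‖q‖)) ^ 2) ∧
    (‖p - q‖ ≤ ‖p‖ / 2 → ∃ C > 0, ∀ x : H,
      ‖(⟪x, p⟫ / ‖p‖ ^ 2) • p - (⟪x, q⟫ / ‖q‖ ^ 2) • q‖ ≤ C * ‖x‖ * ‖p - q‖) := by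
  have hbound := norm_inner_div_norm_sq_smul_sub_le hp hq
  refine ⟨fun x => (hbound x).trans ?_,
    fun _ => ⟨2 / ‖p‖, div_pos two_pos (norm_pos_iff.mpr hp), hbound⟩⟩
  have hmax : 1 ≤ max 1 (‖p‖ / ‖q‖) ^ 2 := one_le_pow₀ (le_max_left _ _)
  calc 2 / ‖p‖ * ‖x‖ * ‖p - q‖ ≤ 3 / ‖p‖ * ‖x‖ * ‖p - q‖ := by gcongr; norm_num
    _ ≤ 3 / ‖p‖ * ‖x‖ * ‖p - q‖ * max 1 (‖p‖ / ‖q‖) ^ 2 :=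
        le_mul_of_one_le_right (by positivity) hmax

/-- Let `H` be a Hilbert space, `p, q ∈ H` nonzero, and let
`γ(x) = ⟨x, p⟩/‖p‖²` and `γ_h(x) = ⟨x, q⟩/‖q‖²` be the coefficients of the orthogonal
projections of `x` onto `Span{p}` and `Span{q}`.  Then for all `x ∈ H`,
`‖γ(x) p − γ_h(x) q‖ ≤ (3/‖p‖) ‖x‖ ‖p − q‖ · max(1, ‖p‖/‖q‖)²`, and in particular, if
`‖p − q‖ ≤ ‖p‖/2` then `‖γ(x)p − γ_h(x)q‖ ≤ C ‖x‖ ‖p − q‖` with `C` depending only on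
`‖p‖`. -/
theorem projection_perturbation
    (H : Type*) [NormedAddCommGroup H] [InnerProductSpace ℝ H] [CompleteSpace H]
    (p q : H) (hp : p ≠ 0) (hq : q ≠ 0) :
    (∀ x : H,
      ‖(⟪x, p⟫ / ‖p‖ ^ 2) • p - (⟪x, q⟫ / ‖q‖ ^ 2) • q‖ ≤
        (3 / ‖p‖) * ‖x‖ * ‖p - q‖ * (max 1 (‖p‖ / ‖q‖)) ^ 2) ∧
    (‖p - q‖ ≤ ‖p‖ / 2 → ∃ C > 0, ∀ x : H,
      ‖(⟪x, p⟫ / ‖p‖ ^ 2) • p - (⟪x, q⟫ / ‖q‖ ^ 2) • q‖ ≤ C * ‖x‖ * ‖p - q‖) :=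
  projection_perturbation_general H p q hp hq
end

section
/- Let Ω be a non-convex bounded polygonal domain with dual singular function p_s and let φ_s ∈ H¹_Δ(Ω) ∩ H¹₀(Ω) solve −Δφ_s = p_s. Let y be the very weak solution with data (f, u) and write y = Π_R y + α(y) p_s with α(y) ∈ ℝ. Then α(y) = (−(u, ∂ₙφ_s)_Γ + ⟨f, φ_s⟩) / ‖p_s‖²_{L²(Ω)}. -/
open RealInnerProductSpace

theorem coeff_eq_inner_div_norm_sq_of_eq_add_smul {𝕜 E : Type*} [RCLike 𝕜]
    [NormedAddCommGroup E] [InnerProductSpace 𝕜 E] {p y z : E} {α : 𝕜} (hp : p ≠ 0)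
    (hy : y = z + α • p) (hz : inner 𝕜 p z = 0) :
    α = inner 𝕜 p y / (‖p‖ : 𝕜) ^ 2 := by
  have hp' : (‖p‖ : 𝕜) ^ 2 ≠ 0 := by exact_mod_cast pow_ne_zero 2 (norm_ne_zero_iff.mpr hp)
  rw [hy, inner_add_right, hz, inner_smul_right, inner_self_eq_norm_sq_to_K, zero_add,
    mul_div_cancel_right₀ _ hp']

/-- `L2 = L²(Ω)`, `GΓ = L²(Γ)`, `V = H¹_Δ(Ω) ∩ H¹₀(Ω)`; `Lap` is the Laplacian, `N` the normal
derivative on `Γ`, and `hvw` is the very weak formulation of the problem with data `(f, u)`. -/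
theorem singular_coefficient_formula_general
    (L2 GΓ : Type*)
    [NormedAddCommGroup L2] [InnerProductSpace ℝ L2]
    [NormedAddCommGroup GΓ] [InnerProductSpace ℝ GΓ]
    (V : Type*) [AddCommGroup V] [Module ℝ V]
    (Lap : V →ₗ[ℝ] L2) (N : V →ₗ[ℝ] GΓ) (f : V →ₗ[ℝ] ℝ)
    (ps : L2) (hps : ps ≠ 0) (φs : V) (hφs : Lap φs = -ps)
    (u : GΓ) (y yR : L2) (α : ℝ)
    (hdec : y = yR + α • ps) (horth : ⟪yR, ps⟫ = 0)
    (hvw : ∀ v : V, ⟪y, Lap v⟫ = ⟪u, N v⟫ - f v) :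
    α = (-⟪u, N φs⟫ + f φs) / ‖ps‖ ^ 2 := by
  have hy_ps : ⟪ps, y⟫ = -⟪u, N φs⟫ + f φs := by
    rw [real_inner_comm, ← neg_neg ps, ← hφs, inner_neg_right, hvw]
    ring
  rw [← hy_ps]
  exact coeff_eq_inner_div_norm_sq_of_eq_add_smul hps hdec (by rwa [real_inner_comm])

/-- Abstract formulation.  `L2 = L²(Ω)`, `GΓ = L²(Γ)`;
`V = H¹_Δ(Ω) ∩ H¹₀(Ω)` with Laplacian `Lap`, normal derivative `N`, source functional
`f`.  `p_s ≠ 0` is the dual singular function and `φ_s ∈ V` solves `−Δφ_s = p_s`.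
`y` is the very weak solution with data `(f, u)` (hypothesis `hvw`), decomposed as
`y = Π_R y + α(y) p_s` with `Π_R y ⊥ p_s`.  Then
`α(y) = (−(u, ∂ₙφ_s)_Γ + ⟨f, φ_s⟩)/‖p_s‖²_{L²(Ω)}`. -/
theorem singular_coefficient_formula
    (L2 GΓ : Type*)
    [NormedAddCommGroup L2] [InnerProductSpace ℝ L2] [CompleteSpace L2]
    [NormedAddCommGroup GΓ] [InnerProductSpace ℝ GΓ] [CompleteSpace GΓ]
    (V : Type*) [AddCommGroup V] [Module ℝ V]
    (Lap : V →ₗ[ℝ] L2) (N : V →ₗ[ℝ] GΓ) (f : V →ₗ[ℝ] ℝ)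
    (ps : L2) (hps : ps ≠ 0) (φs : V) (hφs : Lap φs = -ps)
    (u : GΓ) (y yR : L2) (α : ℝ)
    (hdec : y = yR + α • ps) (horth : ⟪yR, ps⟫ = 0)
    (hvw : ∀ v : V, ⟪y, Lap v⟫ = ⟪u, N v⟫ - f v) :
    α = (-⟪u, N φs⟫ + f φs) / ‖ps‖ ^ 2 :=
  singular_coefficient_formula_general L2 GΓ V Lap N f ps hps φs hφs u y yR α hdec horth hvw
end

section
/- Let Ω be a non-convex bounded polygonal domain. The very weak problem (y, Δv)_Ω = (u, ∂ₙv)_Γ − ⟨f,v⟩ for all v ∈ V = H¹_Δ(Ω) ∩ H¹₀(Ω) is equivalent to the pair of conditions: (i) α(y)‖p_s‖²_{L²(Ω)} = −(u, ∂ₙφ_s)_Γ + ⟨f, φ_s⟩, and (ii) (Π_R y, Δv)_Ω = (u, ∂ₙv)_Γ − ⟨f, v⟩ for all v ∈ H²(Ω) ∩ H¹₀(Ω), where y = Π_R y + α(y) p_s. -/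
/-!
Both sides are linear in the test function, and every test function is `w + c • φs` with
`w ∈ Dom2`, so it suffices to test with `Dom2` and with `φs`. Since `Δ(Dom2) ⊥ p_s`, the
`p_s`-component of `y` is invisible against `Dom2`, giving (ii); against `φs` only it survives,
since `(Π_R y, p_s) = 0`, contributing `-α ‖p_s‖²` and giving (i).
-/

open RealInnerProductSpace

theorem LinearMap.forall_eq_iff_of_forall_eq_add_smul {R V M : Type*} [Semiring R]
    [AddCommMonoid V] [Module R V] [AddCommMonoid M] [Module R M] {F G : V →ₗ[R] M}
    {p : Submodule R V} {x : V} (hspan : ∀ v : V, ∃ w ∈ p, ∃ c : R, v = w + c • x) :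
    (∀ v, F v = G v) ↔ F x = G x ∧ ∀ w ∈ p, F w = G w := by
  refine ⟨fun h => ⟨h x, fun w _ => h w⟩, fun ⟨hx, hp⟩ v => ?_⟩
  obtain ⟨w, hw, c, rfl⟩ := hspan v
  simp only [map_add, map_smul, hx, hp w hw]

section Orthogonal

variable {E : Type*} [NormedAddCommGroup E] [InnerProductSpace ℝ E]

theorem real_inner_add_smul_left_of_inner_eq_zero {x z : E} (p : E) (α : ℝ)
    (hz : ⟪z, p⟫ = 0) : ⟪x + α • p, z⟫ = ⟪x, z⟫ := by
  rw [inner_add_left, real_inner_smul_left, real_inner_comm z p, hz, mul_zero, add_zero]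

theorem real_inner_add_smul_neg_right_of_inner_eq_zero {x p : E} (α : ℝ)
    (hx : ⟪x, p⟫ = 0) : ⟪x + α • p, -p⟫ = -(α * ‖p‖ ^ 2) := by
  rw [inner_neg_right, inner_add_left, real_inner_smul_left, hx,
    real_inner_self_eq_norm_sq, zero_add]

end Orthogonal

theorem veryWeak_equivalent_split_general
    (L2 GΓ : Type*)
    [NormedAddCommGroup L2] [InnerProductSpace ℝ L2]
    [NormedAddCommGroup GΓ] [InnerProductSpace ℝ GΓ]
    (V : Type*) [AddCommGroup V] [Module ℝ V]
    (Lap : V →ₗ[ℝ] L2) (N : V →ₗ[ℝ] GΓ) (f : V →ₗ[ℝ] ℝ)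
    (Dom2 : Submodule ℝ V)
    (ps : L2) (φs : V) (hφs : Lap φs = -ps)
    (horthDom : ∀ w ∈ Dom2, ⟪Lap w, ps⟫ = 0)
    (hspan : ∀ v : V, ∃ w ∈ Dom2, ∃ c : ℝ, v = w + c • φs)
    (u : GΓ) (y yR : L2) (α : ℝ)
    (hdec : y = yR + α • ps) (horth : ⟪yR, ps⟫ = 0) :
    (∀ v : V, ⟪y, Lap v⟫ = ⟪u, N v⟫ - f v) ↔
      (α * ‖ps‖ ^ 2 = -⟪u, N φs⟫ + f φs ∧
        ∀ w ∈ Dom2, ⟪yR, Lap w⟫ = ⟪u, N w⟫ - f w) := by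
  subst hdec
  refine (LinearMap.forall_eq_iff_of_forall_eq_add_smul
    (F := (innerₗ L2 (yR + α • ps)).comp Lap) (G := (innerₗ GΓ u).comp N - f) hspan).trans
    (and_congr ?_ (forall₂_congr fun w hw => ?_))
  · simp only [LinearMap.comp_apply, innerₗ_apply_apply, LinearMap.sub_apply, hφs,
      real_inner_add_smul_neg_right_of_inner_eq_zero α horth]
    constructor <;> intro h <;> linarith
  · simp only [LinearMap.comp_apply, innerₗ_apply_apply, LinearMap.sub_apply,
      real_inner_add_smul_left_of_inner_eq_zero ps α (horthDom w hw)]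

/-- Abstract formulation.  `L2 = L²(Ω)`, `GΓ = L²(Γ)`;
`V = H¹_Δ(Ω) ∩ H¹₀(Ω)` with Laplacian `Lap`, normal derivative `N`, source functional
`f`.  `Dom2 ⊆ V` is the subspace `H²(Ω) ∩ H¹₀(Ω)`, with `(Δw, p_s)_Ω = 0` for
`w ∈ Dom2` (orthogonality of `R` and `p_s`), and `V` decomposes as
`(H²(Ω) ∩ H¹₀(Ω)) ⊕ Span{φ_s}` where `φ_s ∈ V` solves `−Δφ_s = p_s` (`hspan`; the
singular part of `V` may be spanned by `φ_s` since its singular coefficient is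
nonzero).  Writing `y = Π_R y + α(y) p_s` with `Π_R y ⊥ p_s`, the very weak problem
`(y, Δv)_Ω = (u, ∂ₙv)_Γ − ⟨f, v⟩ ∀ v ∈ V` is equivalent to the pair of conditions:
(i) `α(y)‖p_s‖² = −(u, ∂ₙφ_s)_Γ + ⟨f, φ_s⟩`, and
(ii) `(Π_R y, Δv)_Ω = (u, ∂ₙv)_Γ − ⟨f, v⟩` for all `v ∈ H²(Ω) ∩ H¹₀(Ω)`. -/
theorem veryWeak_equivalent_split
    (L2 GΓ : Type*)
    [NormedAddCommGroup L2] [InnerProductSpace ℝ L2] [CompleteSpace L2]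
    [NormedAddCommGroup GΓ] [InnerProductSpace ℝ GΓ] [CompleteSpace GΓ]
    (V : Type*) [AddCommGroup V] [Module ℝ V]
    (Lap : V →ₗ[ℝ] L2) (N : V →ₗ[ℝ] GΓ) (f : V →ₗ[ℝ] ℝ)
    (Dom2 : Submodule ℝ V)
    (ps : L2) (hps : ps ≠ 0) (φs : V) (hφs : Lap φs = -ps)
    (horthDom : ∀ w ∈ Dom2, ⟪Lap w, ps⟫ = 0)
    (hspan : ∀ v : V, ∃ w ∈ Dom2, ∃ c : ℝ, v = w + c • φs)
    (u : GΓ) (y yR : L2) (α : ℝ)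
    (hdec : y = yR + α • ps) (horth : ⟪yR, ps⟫ = 0) :
    (∀ v : V, ⟪y, Lap v⟫ = ⟪u, N v⟫ - f v) ↔
      (α * ‖ps‖ ^ 2 = -⟪u, N φs⟫ + f φs ∧
        ∀ w ∈ Dom2, ⟪yR, Lap w⟫ = ⟪u, N w⟫ - f w) :=
  veryWeak_equivalent_split_general L2 GΓ V Lap N f Dom2 ps φs hφs horthDom hspan u y yR α hdec
    horth
end
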